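/- Let (X,d) be a complete, simply connected geodesic space without focal points, let p, q ∈ X, let σ₁, σ₂ : [0, d(p,q)] → X be unit-speed minimal geodesics from p to q, and let s ∈ (0, d(p,q)) be such that σ₁(s) ≠ σ₂(s). Let γ : [0, L] → X (L = d(σ₁(s), σ₂(s))) be a unit-speed minimal geodesic from σ₁(s) to σ₂(s), and suppose γ(t₀) is an orthogonal projection point of p on γ with d(p, γ(t₀)) < d(p, γ(t)) for all t ≠ t₀. Then t₀ ∈ (0, L), and d(q, γ(t₀)) > d(q, γ(0)) and d(q, γ(t₀)) > d(q, γ(L)). -/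
import Mathlib


open Metric Set Filter

/-- A curve `c` is a minimal geodesic on `I` if there is a speed `v ≥ 0` with
`dist (c t₁) (c t₂) = v * |t₁ - t₂|` for all `t₁ t₂ ∈ I`. -/
def IsMinGeodesicOn {X : Type*} [MetricSpace X] (c : ℝ → X) (I : Set ℝ) : Prop :=
  ∃ v : ℝ, 0 ≤ v ∧ ∀ t₁ ∈ I, ∀ t₂ ∈ I, dist (c t₁) (c t₂) = v * |t₁ - t₂|

/-- A curve `c` is a geodesic on `I` if there is a speed `v ≥ 0` such that every `t ∈ I`
has a neighborhood `U` of `t` in `I` on which `dist (c t₁) (c t₂) = v * |t₁ - t₂|`. -/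
def IsGeodesicOn {X : Type*} [MetricSpace X] (c : ℝ → X) (I : Set ℝ) : Prop :=
  ∃ v : ℝ, 0 ≤ v ∧ ∀ t ∈ I, ∃ U ∈ nhdsWithin t I,
    ∀ t₁ ∈ U, ∀ t₂ ∈ U, dist (c t₁) (c t₂) = v * |t₁ - t₂|

/-- A unit-speed minimal geodesic on `I`. -/
def IsUnitSpeedMinGeodesicOn {X : Type*} [MetricSpace X] (c : ℝ → X) (I : Set ℝ) : Prop :=
  ∀ t₁ ∈ I, ∀ t₂ ∈ I, dist (c t₁) (c t₂) = |t₁ - t₂|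

/-- A geodesic space: every two points are connected by a (unit-speed) minimal geodesic. -/
def GeodesicSpace (X : Type*) [MetricSpace X] : Prop :=
  ∀ p q : X, ∃ c : ℝ → X, c 0 = p ∧ c (dist p q) = q ∧
    IsUnitSpeedMinGeodesicOn c (Icc 0 (dist p q))

/-- The curve `σ₁ : [a,b] → X` is orthogonal to the geodesic `σ : I → X`, with foot
`σ₁ a = σ s₀`, if for every `t ∈ [a,b]` the point `σ₁ t` is locally of minimal distance
from `σ` at the foot parameter `s₀`. -/
def IsOrthogonalAt {X : Type*} [MetricSpace X] (σ : ℝ → X) (I : Set ℝ)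
    (σ₁ : ℝ → X) (a b s₀ : ℝ) : Prop :=
  s₀ ∈ I ∧ σ s₀ = σ₁ a ∧
  ∀ t ∈ Icc a b, IsLocalMinOn (fun s => dist (σ₁ t) (σ s)) I s₀

/-- `q` is an orthogonal projection point of `p` on the geodesic `σ : I → X`: there is a
minimal geodesic `σ₁ : [a,b] → X` orthogonal to `σ` with foot `q` and containing `p`. -/
def IsOrthProjPoint {X : Type*} [MetricSpace X] (σ : ℝ → X) (I : Set ℝ) (p q : X) : Prop :=
  ∃ (σ₁ : ℝ → X) (a b s₀ : ℝ), a ≤ b ∧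
    IsMinGeodesicOn σ₁ (Icc a b) ∧
    IsOrthogonalAt σ I σ₁ a b s₀ ∧
    σ s₀ = q ∧ ∃ t ∈ Icc a b, σ₁ t = p

/-- `p` (not on `σ`) is a focal point of the geodesic `σ : ℝ → X`. -/
def IsFocalPoint {X : Type*} [MetricSpace X] (p : X) (σ : ℝ → X) : Prop :=
  (∀ s : ℝ, σ s ≠ p) ∧
  ∃ ε > (0:ℝ), ∃ l > (0:ℝ), ∃ V : ℝ → ℝ → X,
    V 0 0 = σ 0 ∧ V 0 l = p ∧
    (∀ t ∈ Ioo (-ε) ε,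
      IsMinGeodesicOn (V t) (Icc 0 l) ∧
      V t 0 = σ t ∧
      IsOrthogonalAt σ univ (V t) 0 l t) ∧
    Tendsto (fun t => dist p (V t l) / dist (σ 0) (σ t)) (nhdsWithin 0 {(0:ℝ)}ᶜ) (nhds 0)

/-- The space `X` is without focal points: no point of `X` is a focal point of any
geodesic of `X`. -/
def WithoutFocalPoints (X : Type*) [MetricSpace X] : Prop :=
  ∀ σ : ℝ → X, IsGeodesicOn σ univ → ∀ p : X, ¬ IsFocalPoint p σ

/-- The key step in the proof of Theorem 2.1: if two distinct unit-speed minimal geodesics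
from `p` to `q` separate at parameter `s`, and `γ (t₀)` is the (strict) orthogonal
projection point of `p` on the minimal geodesic `γ` joining `σ₁ s` to `σ₂ s`, then
`t₀` is interior and `γ t₀` is farther from `q` than both endpoints of `γ`. -/
theorem strict_projection_interior_and_farther
    {X : Type*} [MetricSpace X] [CompleteSpace X] [SimplyConnectedSpace X]
    (hGeo : GeodesicSpace X) (hNF : WithoutFocalPoints X)
    (p q : X) (σ₁ σ₂ : ℝ → X)
    (h₁ : IsUnitSpeedMinGeodesicOn σ₁ (Icc 0 (dist p q)))
    (h₂ : IsUnitSpeedMinGeodesicOn σ₂ (Icc 0 (dist p q)))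
    (h₁0 : σ₁ 0 = p) (h₂0 : σ₂ 0 = p)
    (h₁d : σ₁ (dist p q) = q) (h₂d : σ₂ (dist p q) = q)
    (s : ℝ) (hs : s ∈ Ioo 0 (dist p q)) (hsep : σ₁ s ≠ σ₂ s)
    (L : ℝ) (hL : L = dist (σ₁ s) (σ₂ s))
    (γ : ℝ → X) (hγ : IsUnitSpeedMinGeodesicOn γ (Icc 0 L))
    (hγ0 : γ 0 = σ₁ s) (hγL : γ L = σ₂ s)
    (t₀ : ℝ) (ht₀ : t₀ ∈ Icc 0 L)
    (hproj : IsOrthProjPoint γ (Icc 0 L) p (γ t₀))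
    (hstrict : ∀ t ∈ Icc 0 L, t ≠ t₀ → dist p (γ t₀) < dist p (γ t)) :
    t₀ ∈ Ioo 0 L ∧ dist q (γ 0) < dist q (γ t₀) ∧ dist q (γ L) < dist q (γ t₀) := by
  set d := dist p q with hd
  have hs0 : (0:ℝ) < s := hs.1
  have hsd : s < d := hs.2
  have hsIcc : s ∈ Icc 0 d := ⟨hs0.le, hsd.le⟩
  have h0Icc : (0:ℝ) ∈ Icc 0 d := ⟨le_refl _, (hs0.trans hsd).le⟩
  have hdIcc : d ∈ Icc 0 d := ⟨(hs0.trans hsd).le, le_refl _⟩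
  have hL0 : 0 < L := by rw [hL]; exact dist_pos.mpr hsep
  have hLmem : L ∈ Icc 0 L := ⟨hL0.le, le_refl _⟩
  have h0mem : (0:ℝ) ∈ Icc 0 L := ⟨le_refl _, hL0.le⟩
  -- distances from p to endpoints of γ
  have hp0 : dist p (γ 0) = s := by
    rw [hγ0, ← h₁0, h₁ 0 h0Icc s hsIcc, abs_of_nonpos (by linarith), neg_sub, sub_zero]
  have hpL : dist p (γ L) = s := by
    rw [hγL, ← h₂0, h₂ 0 h0Icc s hsIcc, abs_of_nonpos (by linarith), neg_sub, sub_zero]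
  -- distances from q to endpoints of γ
  have hq0 : dist q (γ 0) = d - s := by
    rw [hγ0, ← h₁d, h₁ d hdIcc s hsIcc, abs_of_nonneg (by linarith)]
  have hqL : dist q (γ L) = d - s := by
    rw [hγL, ← h₂d, h₂ d hdIcc s hsIcc, abs_of_nonneg (by linarith)]
  -- t₀ is interior
  have ht0 : t₀ ≠ 0 := by
    intro h
    have := hstrict L hLmem (by rw [h]; exact hL0.ne')
    rw [h, hp0, hpL] at this
    exact lt_irrefl _ this
  have htL : t₀ ≠ L := by
    intro h
    have := hstrict 0 h0mem (by rw [h]; exact hL0.ne)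
    rw [h, hpL, hp0] at this
    exact lt_irrefl _ this
  refine ⟨⟨lt_of_le_of_ne ht₀.1 (Ne.symm ht0), lt_of_le_of_ne ht₀.2 htL⟩, ?_, ?_⟩
  · have h1 : dist p (γ t₀) < s := by
      have := hstrict 0 h0mem (Ne.symm ht0)
      rwa [hp0] at this
    have h2 : d ≤ dist p (γ t₀) + dist q (γ t₀) := by
      have := dist_triangle p (γ t₀) q
      rw [dist_comm (γ t₀) q] at this
      linarith
    rw [hq0]; linarith
  · have h1 : dist p (γ t₀) < s := by
      have := hstrict 0 h0mem (Ne.symm ht0)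
      rwa [hp0] at this
    have h2 : d ≤ dist p (γ t₀) + dist q (γ t₀) := by
      have := dist_triangle p (γ t₀) q
      rw [dist_comm (γ t₀) q] at this
      linarith
    rw [hqL]; linarith
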